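/- arXiv:0706.4113 — 2 statements merged into one kernel-verified Lean document; each statement's English description precedes it below -/
import Mathlib

section
/- Let h be a holomorphic function germ at 0 ∈ ℂ vanishing at 0 and not identically zero, and let G_1,…,G_N be holomorphic function germs at 0 ∈ ℂ vanishing at 0, not all identically zero. Then the vanishing order at 0 of the real-analytic function u(ζ) = Re(h(ζ)) + Σ_{j=1}^N |G_j(ζ)|² equals min( ord₀ h , 2·min_{1≤j≤N} ord₀ G_j ); that is, no cancellation can occur between the purely holomorphic/antiholomorphic terms coming from Re(h) and the mixed terms coming from Σ_j |G_j|². -/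
set_option synthInstance.maxHeartbeats 1000000
set_option maxHeartbeats 1000000

open Filter Topology

noncomputable section

/-- `ℂⁿ` with the Euclidean norm. -/
abbrev Cn (n : ℕ) : Type := EuclideanSpace ℂ (Fin n)

/-- The vanishing order at `0 ∈ ℂ` of a function `f : ℂ → F` (`⊤` if `f` vanishes to
infinite order): for an analytic (respectively real-analytic) germ this is the lowest
degree of a nonzero term of its Taylor expansion at `0` in `ζ` (respectively in
`ζ` and `ζ̄`), i.e. the smallest `m` with `iteratedFDeriv ℝ m f 0 ≠ 0`. -/
def vord {F : Type*} [NormedAddCommGroup F] [NormedSpace ℝ F] (f : ℂ → F) : ℕ∞ :=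
  sInf ((fun m : ℕ => (m : ℕ∞)) '' {m : ℕ | iteratedFDeriv ℝ m f 0 ≠ 0})

/-!
The lower bound is a valuation property: vanishing orders of smooth germs satisfy
`ord (f + g) ≥ min (ord f) (ord g)`, `ord (L ∘ f) ≥ ord f` for linear `L`, and, by the Leibniz
rule, `ord B(f, g) ≥ ord f + ord g` for bilinear `B`; writing `‖G‖² = ⟪G, G⟫` gives
`ord ‖G_j‖² ≥ 2 ord G_j`.

The upper bound comes from rays. A real-analytic germ whose derivatives vanish up to order `d` is
`O(|z|^(d+1))`, so a lower bound `c t^d` along a ray `t ↦ t ξ` forces order `≤ d`. If `h = z^p g`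
with `g 0 ≠ 0`, on the ray where `ξ^p g 0 > 0` we get `u ≥ Re h ≥ c t^p`. If moreover
`2q < p` for `q = ord G_j`, then `h = o(|z|^(2q))` while `‖G_j‖² ≥ c |z|^(2q)`, so nothing can
cancel the term `‖G_j‖²` and `u ≥ c' |z|^(2q)`.
-/

open Asymptotics
open scoped ContDiff

theorem ENat.natCast_sub_lt_of_lt_add {m i : ℕ} {x : ℕ∞} (hi : i ≤ m) (h : (m : ℕ∞) < i + x) :
    ((m - i : ℕ) : ℕ∞) < x := by
  induction x using ENat.recTopCoe with
  | top => exact ENat.natCast_lt_top _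
  | coe x => norm_cast at h ⊢; omega

section Calculus

variable {F F' F'' : Type*} [NormedAddCommGroup F] [NormedSpace ℝ F]
  [NormedAddCommGroup F'] [NormedSpace ℝ F'] [NormedAddCommGroup F''] [NormedSpace ℝ F'']
  {f g : ℂ → F} {n : ℕ∞}

theorem le_vord_iff : n ≤ vord f ↔ ∀ m : ℕ, (m : ℕ∞) < n → iteratedFDeriv ℝ m f 0 = 0 := by
  simp only [vord, le_sInf_iff, Set.forall_mem_image, Set.mem_ofPred_eq]
  refine ⟨fun h m hm => by_contra fun hne => (h hne).not_gt hm, fun h m hm => ?_⟩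
  by_contra! hlt
  exact hm (h m hlt)

theorem one_le_vord_iff : 1 ≤ vord f ↔ f 0 = 0 := by
  simp [le_vord_iff, ← norm_eq_zero (a := iteratedFDeriv ℝ 0 f 0), norm_iteratedFDeriv_zero]

theorem vord_congr (h : f =ᶠ[𝓝 0] g) : vord f = vord g := by
  simp only [vord, (h.iteratedFDeriv ℝ _).self_of_nhds]

theorem vord_zero : vord (fun _ : ℂ => (0 : F)) = ⊤ := by
  simp [vord]

theorem ContDiffAt.vord_le_vord_comp (L : F →L[ℝ] F') (hf : ContDiffAt ℝ ∞ f 0) :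
    vord f ≤ vord (L ∘ f) :=
  le_vord_iff.2 fun m hm => by
    rw [L.iteratedFDeriv_comp_left hf (by exact_mod_cast le_top), le_vord_iff.1 le_rfl m hm]
    ext; simp

theorem ContDiffAt.le_vord_add (hf : ContDiffAt ℝ ∞ f 0) (hg : ContDiffAt ℝ ∞ g 0)
    (hfn : n ≤ vord f) (hgn : n ≤ vord g) : n ≤ vord (fun z => f z + g z) :=
  le_vord_iff.2 fun m hm => by
    rw [fun_iteratedFDeriv_add_apply (hf.of_le (by exact_mod_cast le_top))
      (hg.of_le (by exact_mod_cast le_top)), le_vord_iff.1 hfn m hm, le_vord_iff.1 hgn m hm,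
      add_zero]

theorem le_vord_sum {ι : Type*} {s : Finset ι} {f : ι → ℂ → F}
    (hf : ∀ i ∈ s, ContDiffAt ℝ ∞ (f i) 0) (hn : ∀ i ∈ s, n ≤ vord (f i)) :
    n ≤ vord (fun z => ∑ i ∈ s, f i z) :=
  le_vord_iff.2 fun m hm => by
    rw [iteratedFDeriv_fun_sum_apply fun i hi => (hf i hi).of_le (by exact_mod_cast le_top)]
    exact Finset.sum_eq_zero fun i hi => le_vord_iff.1 (hn i hi) m hm

theorem ContDiffAt.add_vord_le_vord_bilinear (B : F →L[ℝ] F' →L[ℝ] F'') {f : ℂ → F} {g : ℂ → F'}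
    (hf : ContDiffAt ℝ ∞ f 0) (hg : ContDiffAt ℝ ∞ g 0) :
    vord f + vord g ≤ vord (fun z => B (f z) (g z)) := by
  refine le_vord_iff.2 fun m hm => norm_le_zero_iff.1 ?_
  obtain ⟨U, hUo, h0U, hfU⟩ :=
    hf.contDiffWithinAt.contDiffOn' (m := m) (by exact_mod_cast le_top) (by simp)
  obtain ⟨V, hVo, h0V, hgV⟩ :=
    hg.contDiffWithinAt.contDiffOn' (m := m) (by exact_mod_cast le_top) (by simp)
  rw [Set.insert_eq_of_mem (Set.mem_univ _), Set.univ_inter] at hfU hgV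
  have hW := hUo.inter hVo
  have h0W : (0 : ℂ) ∈ U ∩ V := ⟨h0U, h0V⟩
  have key := B.norm_iteratedFDerivWithin_le_of_bilinear (hfU.mono Set.inter_subset_left)
    (hgV.mono Set.inter_subset_right) hW.uniqueDiffOn h0W le_rfl
  simp only [iteratedFDerivWithin_of_isOpen _ hW h0W] at key
  refine key.trans (le_of_eq ?_)
  rw [Finset.sum_eq_zero, mul_zero]
  intro i hi_m
  by_cases hi : (i : ℕ∞) < vord f
  · simp [le_vord_iff.1 le_rfl i hi]
  · have : ((m - i : ℕ) : ℕ∞) < vord g :=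
      ENat.natCast_sub_lt_of_lt_add (Nat.lt_succ_iff.1 (Finset.mem_range.1 hi_m))
        (hm.trans_le (by gcongr; exact not_lt.1 hi))
    simp [le_vord_iff.1 le_rfl _ this]

theorem ContDiffAt.two_mul_vord_le_vord_norm_sq {E : Type*} [NormedAddCommGroup E]
    [InnerProductSpace ℝ E] {f : ℂ → E} (hf : ContDiffAt ℝ ∞ f 0) :
    2 * vord f ≤ vord (fun z => ‖f z‖ ^ 2) := by
  have hinner : (fun z => innerSL ℝ (f z) (f z)) = fun z => ‖f z‖ ^ 2 := by
    funext z
    rw [innerSL_apply_apply, real_inner_self_eq_norm_sq]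
  rw [two_mul, ← hinner]
  exact hf.add_vord_le_vord_bilinear (innerSL ℝ) hf

end Calculus

theorem le_vord_pow (n : ℕ) : (n : ℕ∞) ≤ vord (fun z : ℂ => z ^ n) := by
  induction n with
  | zero => simp
  | succ n ih =>
    calc ((n + 1 : ℕ) : ℕ∞) = 1 + n := by push_cast; ring
      _ ≤ vord (fun z : ℂ => z) + vord (fun z : ℂ => z ^ n) :=
        add_le_add (one_le_vord_iff.2 rfl) ih
      _ ≤ vord (fun z : ℂ => ContinuousLinearMap.mul ℝ ℂ z (z ^ n)) :=
        contDiffAt_id.add_vord_le_vord_bilinear _ (contDiffAt_id.pow n)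
      _ = vord (fun z : ℂ => z ^ (n + 1)) := by simp [pow_succ']

theorem AnalyticAt.analyticOrderAt_le_vord {E : Type*} [NormedAddCommGroup E] [NormedSpace ℂ E]
    [CompleteSpace E] {f : ℂ → E} (hf : AnalyticAt ℂ f 0) : analyticOrderAt f 0 ≤ vord f := by
  cases hn : analyticOrderAt f 0 with
  | top =>
    rw [vord_congr (analyticOrderAt_eq_top.1 hn), vord_zero]
  | coe n =>
    obtain ⟨g, hg, -, hfg⟩ := hf.analyticOrderAt_eq_natCast.1 hn
    rw [vord_congr (g := fun z => ContinuousLinearMap.lsmul ℝ ℂ (z ^ n) (g z))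
      (by filter_upwards [hfg] with z hz; simpa using hz)]
    calc (n : ℕ∞) ≤ vord (fun z : ℂ => z ^ n) + vord g := le_add_right (le_vord_pow n)
      _ ≤ _ := (contDiffAt_id.pow n).add_vord_le_vord_bilinear _
          (hg.restrictScalars.contDiffAt (n := ∞))

theorem min_vord_le_vord_re_add_sum_norm_sq {ι E : Type*} [Fintype ι] [NormedAddCommGroup E]
    [InnerProductSpace ℝ E] {h : ℂ → ℂ} {G : ι → ℂ → E} (hh : ContDiffAt ℝ ∞ h 0)
    (hG : ∀ j, ContDiffAt ℝ ∞ (G j) 0) :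
    min (vord h) (2 * ⨅ j, vord (G j)) ≤ vord (fun z => (h z).re + ∑ j, ‖G j z‖ ^ 2) := by
  have hre : ContDiffAt ℝ ∞ (Complex.reCLM ∘ h) 0 := Complex.reCLM.contDiff.contDiffAt.comp _ hh
  refine hre.le_vord_add (ContDiffAt.sum fun j _ => (hG j).norm_sq ℝ) ?_ ?_
  · exact (min_le_left _ _).trans (hh.vord_le_vord_comp Complex.reCLM)
  · refine le_vord_sum (fun j _ => (hG j).norm_sq ℝ) fun j _ => ?_
    calc min (vord h) (2 * ⨅ j, vord (G j)) ≤ 2 * vord (G j) :=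
          (min_le_right _ _).trans (by gcongr; exact iInf_le _ j)
      _ ≤ vord (fun z => ‖G j z‖ ^ 2) := (hG j).two_mul_vord_le_vord_norm_sq

section Ray

variable {F : Type*} [NormedAddCommGroup F] [NormedSpace ℝ F] [CompleteSpace F] {f : ℂ → F}

theorem AnalyticAt.isBigO_norm_pow_of_le_vord (hf : AnalyticAt ℝ f 0) {n : ℕ}
    (hn : (n : ℕ∞) ≤ vord f) : f =O[𝓝 0] fun z => ‖z‖ ^ n := by
  obtain ⟨p, r, hp⟩ := hf
  have hdiag : ∀ m < n, ∀ y, p m (fun _ => y) = 0 := fun m hm y => by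
    have := hp.factorial_smul y m
    rw [le_vord_iff.1 hn m (by exact_mod_cast hm), zero_apply,
      ← Nat.cast_smul_eq_nsmul ℝ] at this
    exact (smul_eq_zero.1 this).resolve_left (Nat.cast_ne_zero.2 m.factorial_ne_zero)
  have hsum : ∀ y, p.partialSum n y = 0 := fun y =>
    Finset.sum_eq_zero fun m hm => hdiag m (Finset.mem_range.1 hm) y
  simpa [hsum] using hp.hasFPowerSeriesAt.isBigO_sub_partialSum_pow n

theorem tendsto_ofReal_mul_nhdsGT (ξ : ℂ) :
    Tendsto (fun t : ℝ => (t : ℂ) * ξ) (𝓝[>] 0) (𝓝 0) := by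
  have hcont : Continuous fun t : ℝ => (t : ℂ) * ξ := by fun_prop
  simpa using (hcont.tendsto 0).mono_left nhdsWithin_le_nhds

theorem AnalyticAt.vord_le_of_mul_pow_le_norm (hf : AnalyticAt ℝ f 0) {d : ℕ} {ξ : ℂ} {c : ℝ}
    (hc : 0 < c) (hray : ∀ᶠ t : ℝ in 𝓝[>] 0, c * t ^ d ≤ ‖f (t * ξ)‖) : vord f ≤ d := by
  by_contra! hlt
  have hupper : (fun t : ℝ => f (t * ξ)) =O[𝓝[>] 0] fun t => t ^ (d + 1) := by
    have hO := hf.isBigO_norm_pow_of_le_vord (by exact_mod_cast Order.add_one_le_of_lt hlt)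
    refine (hO.comp_tendsto (tendsto_ofReal_mul_nhdsGT ξ)).trans
      (IsBigO.of_bound (‖ξ‖ ^ (d + 1)) ?_)
    filter_upwards with t
    simp [norm_mul, mul_pow, mul_comm]
  have hlower : (fun t : ℝ => t ^ d) =O[𝓝[>] 0] fun t => f (t * ξ) := by
    refine IsBigO.of_bound c⁻¹ ?_
    filter_upwards [hray, self_mem_nhdsWithin] with t ht (htpos : 0 < t)
    rw [Real.norm_of_nonneg (by positivity), inv_mul_eq_div, le_div_iff₀ hc, mul_comm]
    exact ht
  have hne : ∃ᶠ t : ℝ in 𝓝[>] 0, t ^ (d + 1) ≠ 0 :=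
    (eventually_mem_nhdsWithin.mono fun t ht => pow_ne_zero _ (Set.mem_Ioi.1 ht).ne').frequently
  exact ((isLittleO_pow_pow d.lt_succ_self).mono nhdsWithin_le_nhds).not_isBigO hne
    (hlower.trans hupper)

end Ray

theorem eventually_mul_norm_pow_le_norm {E : Type*} [NormedAddCommGroup E] [NormedSpace ℂ E]
    {f g : ℂ → E} {n : ℕ} (hfg : ∀ᶠ z in 𝓝 0, f z = z ^ n • g z) (hg : ContinuousAt g 0)
    (hg0 : g 0 ≠ 0) : ∀ᶠ z in 𝓝 0, ‖g 0‖ / 2 * ‖z‖ ^ n ≤ ‖f z‖ := by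
  filter_upwards [hfg, hg.norm.eventually (lt_mem_nhds (half_lt_self (norm_pos_iff.2 hg0)))]
    with z hfz hgz
  rw [hfz, norm_smul, norm_pow, mul_comm]
  gcongr

theorem exists_eventually_mul_pow_le_re {f g : ℂ → ℂ} {n : ℕ} (hn : n ≠ 0)
    (hfg : ∀ᶠ z in 𝓝 0, f z = z ^ n * g z) (hg : ContinuousAt g 0) (hg0 : g 0 ≠ 0) :
    ∃ ξ : ℂ, ∀ᶠ t : ℝ in 𝓝[>] 0, ‖g 0‖ / 2 * t ^ n ≤ (f (t * ξ)).re := by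
  obtain ⟨ξ, hξ⟩ := IsAlgClosed.exists_pow_nat_eq (starRingEnd ℂ (g 0) / ‖g 0‖)
    (Nat.pos_of_ne_zero hn)
  have hlead : (ξ ^ n * g 0).re = ‖g 0‖ := by
    rw [hξ, div_mul_eq_mul_div, Complex.conj_mul', ← Complex.ofReal_pow, ← Complex.ofReal_div,
      Complex.ofReal_re, sq, mul_div_assoc, div_self (norm_ne_zero_iff.2 hg0), mul_one]
  have hcont : ContinuousAt (fun z => (ξ ^ n * g z).re) 0 :=
    Complex.continuous_re.continuousAt.comp (continuousAt_const.mul hg)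
  have hnear : ∀ᶠ z in 𝓝 0, ‖g 0‖ / 2 < (ξ ^ n * g z).re :=
    hcont.eventually <| lt_mem_nhds <| by
      beta_reduce
      rw [hlead]
      exact half_lt_self (norm_pos_iff.2 hg0)
  refine ⟨ξ, ?_⟩
  filter_upwards [(tendsto_ofReal_mul_nhdsGT ξ).eventually (hfg.and hnear), self_mem_nhdsWithin]
    with t ⟨hft, hgt⟩ (ht : 0 < t)
  rw [hft, mul_pow, mul_assoc, ← Complex.ofReal_pow, Complex.re_ofReal_mul, mul_comm]
  gcongr

theorem vord_le_vord_of_re_le {h : ℂ → ℂ} {u : ℂ → ℝ} (hh : AnalyticAt ℂ h 0) (hh0 : h 0 = 0)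
    (hu : AnalyticAt ℝ u 0) (hle : ∀ z, (h z).re ≤ u z) : vord u ≤ vord h := by
  cases hn : analyticOrderAt h 0 with
  | top => exact le_top.trans_eq (top_le_iff.1 (hn ▸ hh.analyticOrderAt_le_vord)).symm
  | coe n =>
    obtain ⟨g, hg, hg0, hhg⟩ := hh.analyticOrderAt_eq_natCast.1 hn
    have hn0 : n ≠ 0 := by
      rintro rfl
      exact hg0 (by simpa [hh0] using hhg.self_of_nhds.symm)
    obtain ⟨ξ, hξ⟩ :=
      exists_eventually_mul_pow_le_re hn0 (by simpa using hhg) hg.continuousAt hg0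
    calc vord u ≤ n := hu.vord_le_of_mul_pow_le_norm (half_pos (norm_pos_iff.2 hg0))
          (hξ.mono fun t ht => ht.trans ((hle _).trans (Real.le_norm_self _)))
      _ = analyticOrderAt h 0 := hn.symm
      _ ≤ vord h := hh.analyticOrderAt_le_vord

theorem vord_le_two_mul_vord_of_re_add_norm_sq_le {h G : ℂ → ℂ} {u : ℂ → ℝ}
    (hh : AnalyticAt ℝ h 0) (hG : AnalyticAt ℂ G 0) (hu : AnalyticAt ℝ u 0)
    (hle : ∀ z, (h z).re + ‖G z‖ ^ 2 ≤ u z) (hlt : 2 * vord G < vord h) :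
    vord u ≤ 2 * vord G := by
  have hGtop : analyticOrderAt G 0 ≠ ⊤ := fun htop => by
    have : vord G = ⊤ := top_le_iff.1 (htop ▸ hG.analyticOrderAt_le_vord)
    simp [this] at hlt
  obtain ⟨q, hq⟩ := ENat.ne_top_iff_exists.1 hGtop
  obtain ⟨g, hg, hg0, hGg⟩ := hG.analyticOrderAt_eq_natCast.1 hq.symm
  have hqG : (q : ℕ∞) ≤ vord G := hq ▸ hG.analyticOrderAt_le_vord
  set b := ‖g 0‖ / 2
  have hb : 0 < b := half_pos (norm_pos_iff.2 hg0)
  have hGlow : ∀ᶠ z in 𝓝 0, b * ‖z‖ ^ q ≤ ‖G z‖ :=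
    eventually_mul_norm_pow_le_norm (by simpa using hGg) hg.continuousAt hg0
  have hhsmall : ∀ᶠ z in 𝓝 0, ‖h z‖ ≤ b ^ 2 / 2 * ‖z‖ ^ (2 * q) := by
    have h2q : ((2 * q + 1 : ℕ) : ℕ∞) ≤ vord h := by
      have : ((2 * q : ℕ) : ℕ∞) < vord h := lt_of_le_of_lt (by push_cast; gcongr) hlt
      exact_mod_cast Order.add_one_le_of_lt this
    simpa using ((hh.isBigO_norm_pow_of_le_vord h2q).trans_isLittleO
      (isLittleO_norm_pow_norm_pow (2 * q).lt_succ_self)).bound (by positivity : 0 < b ^ 2 / 2)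
  have hunear : ∀ᶠ z in 𝓝 0, b ^ 2 / 2 * ‖z‖ ^ (2 * q) ≤ u z := by
    filter_upwards [hGlow, hhsmall] with z hGz hhz
    have hG2 : b ^ 2 * ‖z‖ ^ (2 * q) ≤ ‖G z‖ ^ 2 := by
      rw [pow_mul', ← mul_pow]
      exact pow_le_pow_left₀ (by positivity) hGz 2
    have hre : -‖h z‖ ≤ (h z).re := neg_le_of_abs_le (Complex.abs_re_le_norm _)
    linarith [hle z]
  calc vord u ≤ (2 * q : ℕ) :=
        hu.vord_le_of_mul_pow_le_norm (ξ := 1) (c := b ^ 2 / 2) (by positivity) ?_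
    _ ≤ 2 * vord G := by push_cast; gcongr
  filter_upwards [(tendsto_ofReal_mul_nhdsGT 1).eventually hunear, self_mem_nhdsWithin]
    with t ht (htpos : 0 < t)
  simpa [abs_of_pos htpos] using ht.trans (Real.le_norm_self _)

theorem AnalyticAt.norm_sq {D E : Type*} [NormedAddCommGroup D] [NormedSpace ℝ D]
    [NormedAddCommGroup E] [InnerProductSpace ℝ E] {f : D → E} {x : D} (hf : AnalyticAt ℝ f x) :
    AnalyticAt ℝ (fun z => ‖f z‖ ^ 2) x := by
  have hinner : (fun z => innerSL ℝ (f z) (f z)) = fun z => ‖f z‖ ^ 2 := by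
    funext z
    rw [innerSL_apply_apply, real_inner_self_eq_norm_sq]
  rw [← hinner]
  exact ((innerSL ℝ).analyticAt_bilinear (f x, f x)).comp (f := fun z => (f z, f z))
    (hf.prod hf)

theorem vanishing_order_re_add_sum_sq_norm_general
    (N : ℕ) (h : ℂ → ℂ) (hh : AnalyticAt ℂ h 0) (hh0 : h 0 = 0)
    (G : Fin N → ℂ → ℂ) (hG : ∀ j, AnalyticAt ℂ (G j) 0)
    (u : ℂ → ℝ) (hu : ∀ ζ, u ζ = (h ζ).re + ∑ j, ‖G j ζ‖ ^ 2) :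
    vord u = min (vord h) (2 * ⨅ j, vord (G j)) := by
  obtain rfl : u = fun ζ => (h ζ).re + ∑ j, ‖G j ζ‖ ^ 2 := funext hu
  have hua : AnalyticAt ℝ (fun ζ => (h ζ).re + ∑ j, ‖G j ζ‖ ^ 2) 0 :=
    (Complex.reCLM.analyticAt _ |>.comp hh.restrictScalars).add
      (Finset.analyticAt_fun_sum _ fun j _ => (hG j).restrictScalars.norm_sq)
  have hre_le : ∀ j ζ, (h ζ).re + ‖G j ζ‖ ^ 2 ≤ (h ζ).re + ∑ j, ‖G j ζ‖ ^ 2 := fun j ζ => by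
    gcongr
    exact Finset.single_le_sum (f := fun j => ‖G j ζ‖ ^ 2) (fun _ _ => by positivity)
      (Finset.mem_univ j)
  have hle_h := vord_le_vord_of_re_le hh hh0 hua fun ζ =>
    le_add_of_nonneg_right (Finset.sum_nonneg fun _ _ => by positivity)
  refine le_antisymm (le_min hle_h ?_) (min_vord_le_vord_re_add_sum_norm_sq
    (hh.restrictScalars.contDiffAt) fun j => (hG j).restrictScalars.contDiffAt)
  rcases le_or_gt (vord h) (2 * ⨅ j, vord (G j)) with hle | hlt
  · exact hle_h.trans hle
  · have : Nonempty (Fin N) := by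
      by_contra hempty
      rw [not_nonempty_iff] at hempty
      simp [iInf_of_empty] at hlt
    obtain ⟨j, hj⟩ := exists_eq_ciInf_of_finite (f := fun j => vord (G j))
    rw [← hj] at hlt ⊢
    exact vord_le_two_mul_vord_of_re_add_norm_sq_le hh.restrictScalars (hG j) hua (hre_le j) hlt

/-- no cancellation in `Re h + Σ |G_j|²`. Let `h` be a holomorphic germ
at `0 ∈ ℂ` vanishing at `0`, not identically zero, and `G_1, …, G_N` holomorphic germs at
`0` vanishing at `0`, not all identically zero.  Then the vanishing order at `0` of
`u(ζ) = Re h(ζ) + Σ_j |G_j(ζ)|²` equals `min(ord₀ h, 2·min_j ord₀ G_j)`. -/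
theorem vanishing_order_re_add_sum_sq_norm
    (N : ℕ) (h : ℂ → ℂ) (hh : AnalyticAt ℂ h 0) (hh0 : h 0 = 0)
    (hhne : ¬ ∀ᶠ ζ in 𝓝 (0 : ℂ), h ζ = 0)
    (G : Fin N → ℂ → ℂ) (hG : ∀ j, AnalyticAt ℂ (G j) 0) (hG0 : ∀ j, G j 0 = 0)
    (hGne : ∃ j, ¬ ∀ᶠ ζ in 𝓝 (0 : ℂ), G j ζ = 0)
    (u : ℂ → ℝ) (hu : ∀ ζ, u ζ = (h ζ).re + ∑ j, ‖G j ζ‖ ^ 2) :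
    vord u = min (vord h) (2 * ⨅ j, vord (G j)) :=
  vanishing_order_re_add_sum_sq_norm_general N h hh hh0 G hG u hu
end
end

section
/- Let D be a connected open subset of ℂ and let ρ be a smooth real-valued function on D such that C = {ρ = 0} is a smooth connected curve in D with dρ nowhere zero at points of C, and such that D ∖ C consists of two nonempty connected components W_1 and W_2 with ρ < 0 on W_1. Let η > 1 and let φ be a smooth negative subharmonic function on W_1. Then it is impossible that −φ = (−ρ)^η on W_1. -/
set_option synthInstance.maxHeartbeats 1000000
set_option maxHeartbeats 1000000

open Filter Topology

noncomputable section

/-!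
On `W₁` write `u = -ρ > 0`. If `φ = -u ^ η`, the chain rule gives
`Δφ = -η u ^ (η - 2) ((η - 1) |∇ρ|² + ρ Δρ)`, so subharmonicity of `φ` forces
`(η - 1) |∇ρ|² + ρ Δρ ≤ 0` on `W₁`. This quantity is continuous on `D` and equals
`(η - 1) |∇ρ|² > 0` at a point `z₀ ∈ C`. Since `dρ(z₀) ≠ 0`, `ρ` takes negative values arbitrarily
close to `z₀`, and these lie in `W₁` because `ρ > 0` on `W₂` (otherwise `ρ ≤ 0` near `z₀`, making
`z₀` a local maximum of `ρ`).
-/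

section SecondDerivative

variable {E : Type*} [NormedAddCommGroup E] [NormedSpace ℝ E]

def secondDirDeriv (f : E → ℝ) (v x : E) : ℝ :=
  fderiv ℝ (fun w => fderiv ℝ f w v) x v

theorem Filter.EventuallyEq.secondDirDeriv_eq {f g : E → ℝ} {x : E} (h : f =ᶠ[𝓝 x] g) (v : E) :
    secondDirDeriv f v x = secondDirDeriv g v x :=
  congrArg (fun L : E →L[ℝ] ℝ => L v)
    (h.fderiv.fun_comp fun L : E →L[ℝ] ℝ => L v).fderiv_eq

theorem ContDiffOn.continuousOn_secondDirDeriv {f : E → ℝ} {s : Set E} (hf : ContDiffOn ℝ 2 f s)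
    (hs : IsOpen s) (v : E) : ContinuousOn (secondDirDeriv f v) s := by
  have hdf : ContDiffOn ℝ 1 (fun w => fderiv ℝ f w v) s :=
    (hf.fderiv_of_isOpen hs le_rfl).clm_apply contDiffOn_const
  exact (hdf.continuousOn_fderiv_of_isOpen hs le_rfl).clm_apply continuousOn_const

theorem HasFDerivAt.neg_rpow_neg {ρ : E → ℝ} {ρ' : E →L[ℝ] ℝ} {x : E} (hρ : HasFDerivAt ρ ρ' x)
    (hx : ρ x < 0) (η : ℝ) :
    HasFDerivAt (fun w => -(-ρ w) ^ η) ((η * (-ρ x) ^ (η - 1)) • ρ') x := by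
  simpa only [smul_neg, neg_neg] using
    (hρ.fun_neg.rpow_const (p := η) (Or.inl (neg_ne_zero.2 hx.ne))).fun_neg

theorem secondDirDeriv_neg_rpow_neg {ρ : E → ℝ} {x : E} (hρ : ContDiffAt ℝ 2 ρ x) (hx : ρ x < 0)
    (η : ℝ) (v : E) :
    secondDirDeriv (fun w => -(-ρ w) ^ η) v x =
      η * ((-ρ x) ^ (η - 1) * secondDirDeriv ρ v x
        - (η - 1) * (-ρ x) ^ (η - 2) * fderiv ℝ ρ x v ^ 2) := by
  have hnear : ∀ᶠ w in 𝓝 x, DifferentiableAt ℝ ρ w ∧ ρ w < 0 :=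
    ((hρ.eventually (by simp)).and (hρ.continuousAt.eventually (gt_mem_nhds hx))).mono
      fun w hw => ⟨hw.1.differentiableAt (by norm_num), hw.2⟩
  have hdψ : (fun w => fderiv ℝ (fun w => -(-ρ w) ^ η) w v)
      =ᶠ[𝓝 x] fun w => η * ((-ρ w) ^ (η - 1) * fderiv ℝ ρ w v) :=
    hnear.mono fun w hw => by
      dsimp only
      rw [(hw.1.hasFDerivAt.neg_rpow_neg hw.2 η).fderiv]
      simp [mul_assoc]
  have hpow : HasFDerivAt (fun w => (-ρ w) ^ (η - 1))
      (((η - 1) * (-ρ x) ^ (η - 1 - 1)) • -fderiv ℝ ρ x) x :=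
    (hρ.differentiableAt (by norm_num)).hasFDerivAt.fun_neg.rpow_const
      (Or.inl (neg_ne_zero.2 hx.ne))
  have hdρ : HasFDerivAt (fun w => fderiv ℝ ρ w v) (fderiv ℝ (fun w => fderiv ℝ ρ w v) x) x :=
    (((hρ.fderiv_right (m := 1) le_rfl).differentiableAt one_ne_zero).clm_apply
      (differentiableAt_const v)).hasFDerivAt
  unfold secondDirDeriv
  rw [hdψ.fderiv_eq, (show HasFDerivAt (fun w => η * ((-ρ w) ^ (η - 1) * fderiv ℝ ρ w v)) _ x
    from (hpow.mul hdρ).const_mul η).fderiv]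
  simp only [smul_apply, add_apply, neg_apply, smul_eq_mul, show η - 1 - 1 = η - 2 by ring]
  ring

end SecondDerivative

section Plane

open Complex

def planeLaplacian (f : ℂ → ℝ) (z : ℂ) : ℝ :=
  secondDirDeriv f 1 z + secondDirDeriv f I z

def gradNormSq (f : ℂ → ℝ) (z : ℂ) : ℝ :=
  fderiv ℝ f z 1 ^ 2 + fderiv ℝ f z I ^ 2

variable {f ρ : ℂ → ℝ} {s : Set ℂ} {z : ℂ}

theorem gradNormSq_pos (h : fderiv ℝ f z ≠ 0) : 0 < gradNormSq f z := by
  have : fderiv ℝ f z 1 ≠ 0 ∨ fderiv ℝ f z I ≠ 0 := by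
    by_contra! h0
    refine h (ContinuousLinearMap.coe_injective (basisOneI.ext fun i => ?_))
    fin_cases i <;> simp [h0.1, h0.2]
  unfold gradNormSq
  rcases this with h1 | h1 <;> positivity

theorem ContDiffOn.continuousOn_gradNormSq (hf : ContDiffOn ℝ 1 f s) (hs : IsOpen s) :
    ContinuousOn (gradNormSq f) s := by
  have hdf := hf.continuousOn_fderiv_of_isOpen hs le_rfl
  exact ((hdf.clm_apply continuousOn_const).pow 2).add ((hdf.clm_apply continuousOn_const).pow 2)

theorem ContDiffOn.continuousOn_planeLaplacian (hf : ContDiffOn ℝ 2 f s) (hs : IsOpen s) :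
    ContinuousOn (planeLaplacian f) s :=
  (hf.continuousOn_secondDirDeriv hs 1).add (hf.continuousOn_secondDirDeriv hs I)

theorem planeLaplacian_neg_rpow_neg (hρ : ContDiffAt ℝ 2 ρ z) (hz : ρ z < 0) (η : ℝ) :
    planeLaplacian (fun w => -(-ρ w) ^ η) z =
      -(η * (-ρ z) ^ (η - 2)) * ((η - 1) * gradNormSq ρ z + ρ z * planeLaplacian ρ z) := by
  have hpow : (-ρ z) ^ (η - 1) = (-ρ z) ^ (η - 2) * -ρ z := by
    rw [← Real.rpow_add_one (neg_ne_zero.2 hz.ne)]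
    ring_nf
  simp only [planeLaplacian, gradNormSq, secondDirDeriv_neg_rpow_neg hρ hz, hpow]
  ring

theorem planeLaplacian_neg_rpow_neg_nonneg_iff (hρ : ContDiffAt ℝ 2 ρ z) (hz : ρ z < 0) {η : ℝ}
    (hη : 0 < η) :
    0 ≤ planeLaplacian (fun w => -(-ρ w) ^ η) z ↔
      (η - 1) * gradNormSq ρ z + ρ z * planeLaplacian ρ z ≤ 0 := by
  have hc : 0 < η * (-ρ z) ^ (η - 2) := mul_pos hη (Real.rpow_pos_of_pos (neg_pos.2 hz) _)
  rw [planeLaplacian_neg_rpow_neg hρ hz, neg_mul, neg_nonneg, mul_nonpos_iff_pos_imp_nonpos]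
  simp [hc, hc.le]

end Plane

theorem IsPreconnected.forall_neg_of_neg {X : Type*} [TopologicalSpace X] {s : Set X}
    (hs : IsPreconnected s) {f : X → ℝ} (hf : ContinuousOn f s) (h0 : ∀ x ∈ s, f x ≠ 0) {a : X}
    (ha : a ∈ s) (hfa : f a < 0) : ∀ x ∈ s, f x < 0 := by
  intro x hx
  by_contra! hfx
  obtain ⟨c, hc, hfc⟩ := hs.intermediate_value₂ ha hx hf continuousOn_const hfa.le hfx
  exact h0 c hc hfc

theorem forall_pos_of_union_eq_diff_zeroSet {E : Type*} [NormedAddCommGroup E] [NormedSpace ℝ E]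
    {D W₁ W₂ : Set E} {ρ : E → ℝ} {z₀ : E} (hD : IsOpen D) (hρ : ContinuousOn ρ D) (hz₀ : z₀ ∈ D)
    (hρz₀ : ρ z₀ = 0) (hdρ : fderiv ℝ ρ z₀ ≠ 0) (hW₂ : IsPreconnected W₂)
    (hunion : W₁ ∪ W₂ = D \ {z ∈ D | ρ z = 0}) (hW₁ : ∀ z ∈ W₁, ρ z < 0) :
    ∀ z ∈ W₂, 0 < ρ z := by
  have hW₂D : W₂ ⊆ D := fun z hz => (hunion.subset (Or.inr hz)).1
  have hW₂ne : ∀ z ∈ W₂, ρ z ≠ 0 := fun z hz h0 => (hunion.subset (Or.inr hz)).2 ⟨hW₂D hz, h0⟩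
  by_contra! hneg
  obtain ⟨w, hw, hρw⟩ := hneg
  have hW₂neg := hW₂.forall_neg_of_neg (hρ.mono hW₂D) hW₂ne hw (hρw.lt_of_ne (hW₂ne w hw))
  refine hdρ (IsLocalMax.fderiv_eq_zero ?_)
  filter_upwards [hD.mem_nhds hz₀] with z hz
  rw [hρz₀]
  by_contra! hpos
  rcases (hunion ▸ ⟨hz, fun h => hpos.ne' h.2⟩ : z ∈ W₁ ∪ W₂) with hz₁ | hz₂
  · exact (hW₁ z hz₁).not_gt hpos
  · exact (hW₂neg z hz₂).not_gt hpos

theorem no_subharmonic_with_fractional_vanishing_order_general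
    (D : Set ℂ) (hD : IsOpen D)
    (ρ : ℂ → ℝ) (hρ : ContDiffOn ℝ (⊤ : ℕ∞) ρ D)
    (C : Set ℂ) (hC : C = {z ∈ D | ρ z = 0}) (hCconn : IsConnected C)
    (hdρ : ∀ z ∈ C, fderiv ℝ ρ z ≠ 0)
    (W₁ W₂ : Set ℂ) (hW₁o : IsOpen W₁)
    (hW₂c : IsConnected W₂)
    (hunion : W₁ ∪ W₂ = D \ C)
    (hρneg : ∀ z ∈ W₁, ρ z < 0)
    (η : ℝ) (hη : 1 < η)
    (φ : ℂ → ℝ)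
    (hsubh : ∀ z ∈ W₁,
      0 ≤ fderiv ℝ (fun w => fderiv ℝ φ w 1) z 1 +
          fderiv ℝ (fun w => fderiv ℝ φ w Complex.I) z Complex.I) :
    ¬ ∀ z ∈ W₁, -φ z = (-ρ z) ^ η := by
  intro h
  subst hC
  obtain ⟨z₀, hz₀D, hρz₀⟩ := hCconn.nonempty
  have hdρ₀ := hdρ z₀ ⟨hz₀D, hρz₀⟩
  have hρ2 : ContDiffOn ℝ 2 ρ D := hρ.of_le (WithTop.coe_le_coe.2 le_top)
  set g : ℂ → ℝ := fun z => (η - 1) * gradNormSq ρ z + ρ z * planeLaplacian ρ z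
  have hg_nonpos : ∀ z ∈ W₁, g z ≤ 0 := fun z hz => by
    have hφ : φ =ᶠ[𝓝 z] fun w => -(-ρ w) ^ η :=
      eventually_of_mem (hW₁o.mem_nhds hz) fun w hw => by linarith [h w hw]
    have hzD : z ∈ D := (hunion.subset (Or.inl hz)).1
    rw [← planeLaplacian_neg_rpow_neg_nonneg_iff (hρ2.contDiffAt (hD.mem_nhds hzD)) (hρneg z hz)
      (by linarith), planeLaplacian, ← hφ.secondDirDeriv_eq, ← hφ.secondDirDeriv_eq]
    exact hsubh z hz
  have hg_pos : ∀ᶠ z in 𝓝 z₀, 0 < g z := by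
    have hg : ContinuousOn g D :=
      (continuousOn_const.mul ((hρ2.of_le one_le_two).continuousOn_gradNormSq hD)).add
        (hρ2.continuousOn.mul (hρ2.continuousOn_planeLaplacian hD))
    refine (hg.continuousAt (hD.mem_nhds hz₀D)).eventually (lt_mem_nhds ?_)
    simpa [g, hρz₀] using mul_pos (sub_pos.2 hη) (gradNormSq_pos hdρ₀)
  have hρ_neg : ∃ᶠ z in 𝓝 z₀, ρ z < 0 := by
    simpa [IsLocalMin, IsMinFilter, hρz₀] using mt IsLocalMin.fderiv_eq_zero hdρ₀
  obtain ⟨z, ⟨hzD, hgz⟩, hρz⟩ :=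
    (((hD.eventually_mem hz₀D).and hg_pos).and_frequently hρ_neg).exists
  have hW₂pos := forall_pos_of_union_eq_diff_zeroSet hD hρ.continuousOn hz₀D hρz₀ hdρ₀
    hW₂c.isPreconnected hunion hρneg
  have hzW₁ : z ∈ W₁ := (hunion ▸ ⟨hzD, fun h => hρz.ne h.2⟩ : z ∈ W₁ ∪ W₂).resolve_right
    fun hz => (hW₂pos z hz).not_gt hρz
  exact (hg_nonpos z hzW₁).not_gt hgz

/-- (IV.11.1). Let `D ⊆ ℂ` be a connected open set, `ρ` a smooth
real-valued function on `D` whose zero set `C = {ρ = 0}` is a smooth connected curve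
(`dρ ≠ 0` along `C`) such that `D ∖ C` consists of two nonempty connected open components
`W₁`, `W₂`, with `ρ < 0` on `W₁`.  Let `η > 1` and let `φ` be a smooth negative subharmonic
function on `W₁` (the Laplacian of `φ` is nonnegative on `W₁`).  Then it is impossible that
`-φ = (-ρ)^η` on `W₁`. -/
theorem no_subharmonic_with_fractional_vanishing_order
    (D : Set ℂ) (hD : IsOpen D) (hDconn : IsConnected D)
    (ρ : ℂ → ℝ) (hρ : ContDiffOn ℝ (⊤ : ℕ∞) ρ D)
    (C : Set ℂ) (hC : C = {z ∈ D | ρ z = 0}) (hCconn : IsConnected C)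
    (hdρ : ∀ z ∈ C, fderiv ℝ ρ z ≠ 0)
    (W₁ W₂ : Set ℂ) (hW₁o : IsOpen W₁) (hW₂o : IsOpen W₂)
    (hW₁c : IsConnected W₁) (hW₂c : IsConnected W₂)
    (hdisj : Disjoint W₁ W₂) (hunion : W₁ ∪ W₂ = D \ C)
    (hρneg : ∀ z ∈ W₁, ρ z < 0)
    (η : ℝ) (hη : 1 < η)
    (φ : ℂ → ℝ) (hφ : ContDiffOn ℝ (⊤ : ℕ∞) φ W₁) (hφneg : ∀ z ∈ W₁, φ z < 0)
    (hsubh : ∀ z ∈ W₁,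
      0 ≤ fderiv ℝ (fun w => fderiv ℝ φ w 1) z 1 +
          fderiv ℝ (fun w => fderiv ℝ φ w Complex.I) z Complex.I) :
    ¬ ∀ z ∈ W₁, -φ z = (-ρ z) ^ η :=
  no_subharmonic_with_fractional_vanishing_order_general D hD ρ hρ C hC hCconn hdρ W₁ W₂ hW₁o hW₂c
    hunion hρneg η hη φ hsubh
end
end
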